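/- arXiv:2601.06001 — 5 statements merged into one kernel-verified Lean document; each statement's English description precedes it below -/
import Mathlib

section
/- Let φ be a positive CNF formula over variables X_1,…,X_m with nonempty clauses D_1,…,D_ℓ ⊆ {1,…,m}, and let k ≥ 1. Define the matrix M ∈ {0,1}^{(ℓ+k)×m} whose rows 1,…,k−1 are all-zero, whose row k−1+i is the incidence row of clause D_i for 1 ≤ i ≤ ℓ, and whose row ℓ+k is all-zero. Then for every set of columns C ⊆ {1,…,m} and for each of the three rankings (sum, max, lex) of the rows of M restricted to C, the rank of row ℓ+k is at most k if and only if the assignment α_C models φ (i.e., C ∩ D_i ≠ ∅ for every i ∈ {1,…,ℓ}). -/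
open Finset

/-- The rank of row `i` under keys `key` in ascending order with index tie-breaking:
`rank(i) = #{j : key j < key i} + #{j : key j = key i ∧ j ≤ i}` (ranks are `1, …, n`). -/
def rankOf {n : ℕ} {K : Type*} [LinearOrder K] (key : Fin n → K) (i : Fin n) : ℕ :=
  (Finset.univ.filter (fun j => key j < key i)).card +
    (Finset.univ.filter (fun j => key j = key i ∧ j ≤ i)).card

/-!
The all-zero last row has the least key under each of the three rankings, and it is the last
index, so its rank is the number of rows sharing its key, i.e. of rows vanishing on `C`. These
are the `k` padding rows together with the rows of the clauses that `C` misses; hence the rank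
is at most `k` iff `C` meets every clause.
-/

theorem rankOf_eq_card_filter_eq {n : ℕ} {K : Type*} [LinearOrder K] (key : Fin n → K)
    {i : Fin n} (hmin : ∀ j, key i ≤ key j) (hmax : ∀ j, j ≤ i) :
    rankOf key i = #{j | key j = key i} := by
  simp [rankOf, hmin, hmax]

theorem List.replicate_bot_le {α : Type*} [LinearOrder α] [OrderBot α] (l : List α) :
    List.replicate l.length ⊥ ≤ l := by
  refine not_lt.1 fun hlt => ?_
  induction l with
  | nil => exact List.not_lt_nil _ hlt
  | cons a l ih =>
    rcases List.cons_lex_cons_iff.1 hlt with ha | ⟨-, hl⟩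
    · exact not_lt_bot ha
    · exact ih hl

structure DetectsVanishingOn {ι K : Type*} [LinearOrder K] (C : Finset ι)
    (F : (ι → ℕ) → K) : Prop where
  zero_le : ∀ v, F 0 ≤ F v
  eq_zero_iff : ∀ v, F v = F 0 ↔ ∀ j ∈ C, v j = 0

namespace DetectsVanishingOn

variable {ι : Type*} (C : Finset ι)

theorem sum : DetectsVanishingOn C fun v => ∑ j ∈ C, v j where
  zero_le _ := by simp
  eq_zero_iff _ := by simp [Finset.sum_eq_zero_iff]

theorem sup : DetectsVanishingOn C fun v => C.sup v where
  zero_le _ := by simp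
  eq_zero_iff v := by
    rw [Pi.zero_def, ← bot_eq_zero, Finset.sup_bot, Finset.sup_eq_bot_iff]

theorem sortMap [LinearOrder ι] : DetectsVanishingOn C fun v => (C.sort (· ≤ ·)).map v where
  zero_le v := by
    simpa [Pi.zero_def, List.map_const'] using List.replicate_bot_le ((C.sort (· ≤ ·)).map v)
  eq_zero_iff v := by simp [List.map_inj_left]

end DetectsVanishingOn

def clauseRow (ℓ k : ℕ) (i : Fin ℓ) : Fin (ℓ + k) := ⟨k - 1 + i, by omega⟩

theorem clauseRow_injective (ℓ k : ℕ) : Function.Injective (clauseRow ℓ k) :=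
  fun i i' h => Fin.ext (by simpa [clauseRow] using congrArg Fin.val h)

theorem exists_clauseRow_eq {ℓ k : ℕ} {r : Fin (ℓ + k)}
    (hr : ¬((r : ℕ) < k - 1 ∨ (r : ℕ) = ℓ + k - 1)) : ∃ i, clauseRow ℓ k i = r :=
  ⟨⟨r - (k - 1), by omega⟩, Fin.ext (by simp only [clauseRow]; omega)⟩

section Reduction

variable {ℓ m k : ℕ} {D : Fin ℓ → Finset (Fin m)} {M : Fin (ℓ + k) → Fin m → ℕ}
  (hMzero : ∀ (r : Fin (ℓ + k)) (j : Fin m),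
    ((r : ℕ) < k - 1 ∨ (r : ℕ) = ℓ + k - 1) → M r j = 0)
  (hMclause : ∀ (i : Fin ℓ) (j : Fin m), M (clauseRow ℓ k i) j = if j ∈ D i then 1 else 0)
  (C : Finset (Fin m))
include hMzero hMclause

theorem card_rows_vanishing_on_le_iff :
    #{r | ∀ j ∈ C, M r j = 0} ≤ k ↔ ∀ i, (C ∩ D i).Nonempty := by
  set S : Finset (Fin (ℓ + k)) := {r | ∀ j ∈ C, M r j = 0}
  set Z : Finset (Fin (ℓ + k)) := (univ.image (clauseRow ℓ k))ᶜ
  have hZ : #Z = k := by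
    rw [card_compl, card_image_of_injective _ (clauseRow_injective ℓ k)]
    simp
  have hZS : Z ⊆ S := by
    intro r hr
    simp only [Z, mem_compl, mem_image, mem_univ, true_and, not_exists] at hr
    refine mem_filter.2 ⟨mem_univ r, fun j _ => hMzero r j (not_not.1 fun h => ?_)⟩
    obtain ⟨i, rfl⟩ := exists_clauseRow_eq h
    exact hr i rfl
  have hclause : ∀ i, clauseRow ℓ k i ∈ S ↔ ¬(C ∩ D i).Nonempty := by
    simp [S, hMclause, Finset.Nonempty]
  calc #S ≤ k ↔ S ⊆ Z :=
        ⟨fun h => (eq_of_subset_of_card_le hZS (h.trans_eq hZ.symm)).ge,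
          fun h => (card_le_card h).trans_eq hZ⟩
    _ ↔ ∀ i, clauseRow ℓ k i ∉ S := by
        simp only [Z, subset_iff, mem_compl, mem_image, mem_univ, true_and, not_exists]
        exact ⟨fun h i hi => h hi i rfl, fun h r hr i hir => h i (hir ▸ hr)⟩
    _ ↔ ∀ i, (C ∩ D i).Nonempty := by
        simp only [hclause, not_not]

theorem rankOf_last_le_iff_forall_nonempty {K : Type*} [LinearOrder K]
    {F : (Fin m → ℕ) → K} (hF : DetectsVanishingOn C F) {last : Fin (ℓ + k)}
    (hlast : (last : ℕ) = ℓ + k - 1) :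
    rankOf (fun r => F (M r)) last ≤ k ↔ ∀ i, (C ∩ D i).Nonempty := by
  have hzero : M last = 0 := funext fun j => hMzero _ j (Or.inr hlast)
  rw [rankOf_eq_card_filter_eq _ (fun r => hzero ▸ hF.zero_le _)
    (fun r => Fin.le_def.2 (by omega)), hzero]
  simp only [hF.eq_zero_iff]
  exact card_rows_vanishing_on_le_iff hMzero hMclause C

end Reduction

/-- Let `φ` be a positive CNF formula with nonempty clauses
`D 1, …, D ℓ ⊆ {1,…,m}` and let `k ≥ 1`.  Let `M ∈ {0,1}^{(ℓ+k) × m}` have all-zero rows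
`1, …, k−1`, incidence rows of the clauses as rows `k, …, k+ℓ−1` (row `k−1+i` is the
incidence row of `D i`), and an all-zero last row `ℓ+k`.  Then for every column set `C`
and each of the three rankings (sum, max, lex) of the rows of `M` restricted to `C`, the
rank of row `ℓ+k` is at most `k` iff the assignment `α_C` models `φ`, i.e.
`C ∩ D i ≠ ∅` for every `i`. -/
theorem stmt_8 (ℓ m k : ℕ) (hk : 1 ≤ k)
    (D : Fin ℓ → Finset (Fin m))
    (M : Fin (ℓ + k) → Fin m → ℕ)
    (hMzero : ∀ (r : Fin (ℓ + k)) (j : Fin m),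
      ((r : ℕ) < k - 1 ∨ (r : ℕ) = ℓ + k - 1) → M r j = 0)
    (hMclause : ∀ (i : Fin ℓ) (j : Fin m),
      M ⟨k - 1 + (i : ℕ), by have := i.isLt; omega⟩ j = if j ∈ D i then 1 else 0)
    (C : Finset (Fin m)) :
    (rankOf (fun r => ∑ j ∈ C, M r j) ⟨ℓ + k - 1, by omega⟩ ≤ k
        ↔ ∀ i : Fin ℓ, (C ∩ D i).Nonempty) ∧
    (rankOf (fun r => C.sup (fun j => M r j)) ⟨ℓ + k - 1, by omega⟩ ≤ k
        ↔ ∀ i : Fin ℓ, (C ∩ D i).Nonempty) ∧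
    (rankOf (fun r => (C.sort (· ≤ ·)).map (fun j => M r j)) ⟨ℓ + k - 1, by omega⟩ ≤ k
        ↔ ∀ i : Fin ℓ, (C ∩ D i).Nonempty) :=
  ⟨rankOf_last_le_iff_forall_nonempty hMzero hMclause C (.sum C) rfl,
    rankOf_last_le_iff_forall_nonempty hMzero hMclause C (.sup C) rfl,
    rankOf_last_le_iff_forall_nonempty hMzero hMclause C (.sortMap C) rfl⟩
end

section
/- Let φ be a positive CNF formula over variables X_1,…,X_m with nonempty clauses D_1,…,D_ℓ ⊆ {1,…,m}. For κ ∈ {1,2}, define the matrix M_κ ∈ {0,1}^{(2ℓ+κ)×m} whose rows 1,…,ℓ are the incidence rows of D_1,…,D_ℓ and whose remaining ℓ+κ rows are all-zero. Fix one of the three rankings (sum, max, lex) and write r(M_κ, C) for the permutation of the rows of M_κ given by that ranking restricted to the columns in C. Assume the clauses are indexed so that in the full-column ranking r(M_κ, {1,…,m}), row i precedes row i' whenever 1 ≤ i < i' ≤ ℓ. Then for every set of columns C ⊆ {1,…,m}: d_md(r(M_2, {1,…,m}), r(M_2, C)) − d_md(r(M_1, {1,…,m}), r(M_1, C)) equals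 0 if α_C models φ, and equals 1 otherwise. -/
/-!
Let `n = 2ℓ + κ` be the number of rows. Every clause row has a positive full-column key, so in
the full ranking the `n - ℓ` zero rows come first and, by the ordering assumption, clause `i`
has rank `n - ℓ + i + 1`. Restricted to `C`, a clause missed by `C` gets the zero key and
overtakes all zero rows, landing at rank at most `i + 1`: it is displaced by at least `n - ℓ`.
Every other row moves by at most `ℓ`. Since `n ≥ 2ℓ`, the maximum displacement is `n - ℓ` plus a
quantity independent of `n` when `α_C` falsifies the formula, and is independent of `n` when it
satisfies it; one more zero row adds exactly `1` in the first case and nothing in the second.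
-/

open Finset

/-- The `n × m` matrix (with `n ≥ ℓ`) whose first `ℓ` rows are the incidence rows of the
clauses `D 1, …, D ℓ` and whose remaining rows are all-zero. -/
def clauseMat (ℓ m n : ℕ) (D : Fin ℓ → Finset (Fin m)) : Fin n → Fin m → ℕ :=
  fun r j => if h : (r : ℕ) < ℓ then (if j ∈ D ⟨(r : ℕ), h⟩ then 1 else 0) else 0

/-- The "sum" key of row `r` restricted to the columns in `C`. -/
def sumKey {n m : ℕ} (M : Fin n → Fin m → ℕ) (C : Finset (Fin m)) : Fin n → ℕ :=
  fun r => ∑ j ∈ C, M r j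

/-- The "max" key of row `r` restricted to the columns in `C` (maximum over `∅` is `0`). -/
def maxKey {n m : ℕ} (M : Fin n → Fin m → ℕ) (C : Finset (Fin m)) : Fin n → ℕ :=
  fun r => C.sup (fun j => M r j)

/-- The "lex" key of row `r`: the tuple of its entries in the columns of `C`, listed in
increasing column order, compared lexicographically. -/
def lexKey {n m : ℕ} (M : Fin n → Fin m → ℕ) (C : Finset (Fin m)) : Fin n → List ℕ :=
  fun r => (C.sort (· ≤ ·)).map (fun j => M r j)

/-- The maximum displacement distance between two rank functions:
`d_md(π₁, π₂) = max_i |π₁(i) − π₂(i)|`. -/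
def dMD {n : ℕ} (f g : Fin n → ℕ) : ℕ :=
  Finset.univ.sup (fun i => ((f i : ℤ) - (g i : ℤ)).natAbs)

lemma Fin.card_filter_eq_card_filter_castLE_add {ℓ n : ℕ} (hn : ℓ ≤ n) (P : Fin n → Prop)
    [DecidablePred P] :
    #{j | P j} = #{i : Fin ℓ | P (Fin.castLE hn i)} + #{j : Fin n | P j ∧ ℓ ≤ (j : ℕ)} := by
  have hlow : #{j : Fin n | P j ∧ (j : ℕ) < ℓ} = #{i : Fin ℓ | P (Fin.castLE hn i)} := by
    rw [← card_map (Fin.castLEEmb hn)]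
    congr 1
    ext j
    simp only [mem_filter, mem_map, mem_univ, true_and, Fin.coe_castLEEmb]
    constructor
    · rintro ⟨hP, hj⟩
      exact ⟨⟨j, hj⟩, hP, rfl⟩
    · rintro ⟨i, hP, rfl⟩
      exact ⟨hP, i.isLt⟩
  rw [← hlow, ← card_filter_add_card_filter_not (p := fun j : Fin n => (j : ℕ) < ℓ),
    filter_filter, filter_filter]
  simp only [not_lt]

lemma Fin.card_filter_le_val {ℓ n : ℕ} (hn : ℓ ≤ n) : #{j : Fin n | ℓ ≤ (j : ℕ)} = n - ℓ := by
  have := card_filter_add_card_filter_not (s := (univ : Finset (Fin n))) (fun j => (j : ℕ) < ℓ)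
  simp only [Fin.card_filter_val_lt, not_lt, card_univ, Fintype.card_fin] at this
  omega

lemma Fin.card_filter_le_val_and_le {ℓ n : ℕ} {r : Fin n} (hr : ℓ ≤ (r : ℕ)) :
    #{j : Fin n | ℓ ≤ (j : ℕ) ∧ j ≤ r} = r - ℓ + 1 := by
  have := card_filter_add_card_filter_not (s := ({j : Fin n | (j : ℕ) < r + 1} : Finset _))
    (fun j => (j : ℕ) < ℓ)
  simp only [filter_filter, Fin.card_filter_val_lt, not_lt] at this
  have hlow : univ.filter (fun j : Fin n => (j : ℕ) < r + 1 ∧ (j : ℕ) < ℓ)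
      = univ.filter (fun j : Fin n => (j : ℕ) < ℓ) :=
    filter_congr fun j _ => ⟨And.right, fun h => ⟨by omega, h⟩⟩
  have hhigh : univ.filter (fun j : Fin n => (j : ℕ) < r + 1 ∧ ℓ ≤ (j : ℕ))
      = univ.filter (fun j : Fin n => ℓ ≤ (j : ℕ) ∧ j ≤ r) :=
    filter_congr fun j _ => by rw [Fin.le_def]; omega
  rw [hlow, hhigh, Fin.card_filter_val_lt] at this
  have := r.isLt
  omega

lemma Fin.exists_castLE_or_le {ℓ n : ℕ} (hn : ℓ ≤ n) (r : Fin n) :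
    (∃ i : Fin ℓ, Fin.castLE hn i = r) ∨ ℓ ≤ (r : ℕ) := by
  rcases lt_or_ge (r : ℕ) ℓ with h | h
  · exact Or.inl ⟨⟨r, h⟩, rfl⟩
  · exact Or.inr h

lemma Fin.card_filter_and_le_le {ℓ : ℕ} (P : Fin ℓ → Prop) [DecidablePred P] (i : Fin ℓ) :
    #{i' | P i' ∧ i' ≤ i} ≤ i + 1 :=
  (card_le_card fun _ hi' => mem_Iic.mpr (mem_filter.mp hi').2.2).trans_eq (Fin.card_Iic i)

section Rank

variable {K : Type*} [LinearOrder K] {n : ℕ}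

lemma one_le_rankOf (key : Fin n → K) (i : Fin n) : 1 ≤ rankOf key i :=
  Nat.le_add_left _ _ |>.trans' (card_pos.mpr ⟨i, by simp⟩)

lemma rankOf_le (key : Fin n → K) (i : Fin n) : rankOf key i ≤ n := by
  have hdisj : Disjoint ({j | key j < key i} : Finset (Fin n))
      ({j | key j = key i ∧ j ≤ i} : Finset (Fin n)) :=
    disjoint_filter.mpr fun j _ hlt heq => hlt.ne heq.1
  rw [rankOf, ← card_union_of_disjoint hdisj]
  exact (card_le_univ _).trans_eq (Fintype.card_fin n)

lemma rankOf_eq_of_strictMono {key : Fin n → K} (hkey : StrictMono (rankOf key)) (i : Fin n) :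
    rankOf key i = i + 1 := by
  let g : Fin n → Fin n := fun i =>
    ⟨rankOf key i - 1, by have := one_le_rankOf key i; have := rankOf_le key i; omega⟩
  have hg : StrictMono g := fun i i' h => by
    have := one_le_rankOf key i
    have := hkey h
    simp only [g, Fin.mk_lt_mk]
    omega
  have : rankOf key i - 1 = i := congrArg Fin.val (hg.apply_eq (x := i))
  have := one_le_rankOf key i
  omega

end Rank

section PadKey

variable {K : Type*} {ℓ n : ℕ}

def padKey (n : ℕ) (f : Fin ℓ → K) (z : K) : Fin n → K :=
  fun r => if h : (r : ℕ) < ℓ then f ⟨r, h⟩ else z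

@[simp]
lemma padKey_castLE (hn : ℓ ≤ n) (f : Fin ℓ → K) (z : K) (i : Fin ℓ) :
    padKey n f z (Fin.castLE hn i) = f i :=
  dif_pos i.isLt

lemma padKey_of_le (f : Fin ℓ → K) (z : K) {r : Fin n} (hr : ℓ ≤ (r : ℕ)) :
    padKey n f z r = z :=
  dif_neg (not_lt.mpr hr)

lemma apply_padKey {K' : Type*} (F : K → K') (f : Fin ℓ → K) (z : K) (r : Fin n) :
    F (padKey n f z r) = padKey n (F ∘ f) (F z) r :=
  apply_dite F _ _ _

variable [LinearOrder K]

lemma rankOf_padKey_castLE_of_lt (hn : ℓ ≤ n) {f : Fin ℓ → K} {z : K} {i : Fin ℓ}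
    (hi : z < f i) : rankOf (padKey n f z) (Fin.castLE hn i) = n - ℓ + rankOf f i := by
  have hbelow : #{j : Fin n | padKey n f z j < f i ∧ ℓ ≤ (j : ℕ)} = n - ℓ := by
    rw [← Fin.card_filter_le_val hn]
    exact congrArg card <| filter_congr fun j _ =>
      ⟨And.right, fun hj => ⟨(padKey_of_le f z hj).trans_lt hi, hj⟩⟩
  have htie : #{j : Fin n | (padKey n f z j = f i ∧ j ≤ Fin.castLE hn i) ∧ ℓ ≤ (j : ℕ)} = 0 :=
    card_eq_zero.mpr <| filter_eq_empty_iff.mpr fun j _ ⟨⟨_, hji⟩, hj⟩ => by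
      have : (j : ℕ) ≤ i := hji
      omega
  rw [rankOf, rankOf, padKey_castLE hn f z i,
    Fin.card_filter_eq_card_filter_castLE_add hn (fun j => padKey n f z j < f i),
    Fin.card_filter_eq_card_filter_castLE_add hn
      (fun j => padKey n f z j = f i ∧ j ≤ Fin.castLE hn i), hbelow, htie]
  simp only [padKey_castLE, Fin.castLE_le_castLE_iff]
  omega

variable {f : Fin ℓ → K} {z : K}

lemma rankOf_padKey_castLE_of_eq (hn : ℓ ≤ n) (hz : ∀ i, z ≤ f i) {i : Fin ℓ} (hi : f i = z) :
    rankOf (padKey n f z) (Fin.castLE hn i) = #{i' | f i' = z ∧ i' ≤ i} := by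
  have hbelow : #{j : Fin n | padKey n f z j < f i} = 0 :=
    card_eq_zero.mpr <| filter_eq_empty_iff.mpr fun j _ => by
      rcases Fin.exists_castLE_or_le hn j with ⟨i', rfl⟩ | hj
      · simpa [hi] using hz i'
      · simp [padKey_of_le f z hj, hi]
  have htie : #{j : Fin n | (padKey n f z j = f i ∧ j ≤ Fin.castLE hn i) ∧ ℓ ≤ (j : ℕ)} = 0 :=
    card_eq_zero.mpr <| filter_eq_empty_iff.mpr fun j _ ⟨⟨_, hji⟩, hj⟩ => by
      have : (j : ℕ) ≤ i := hji
      omega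
  rw [rankOf, padKey_castLE hn f z i, hbelow, Fin.card_filter_eq_card_filter_castLE_add hn
    (fun j => padKey n f z j = f i ∧ j ≤ Fin.castLE hn i), htie]
  simp only [padKey_castLE, Fin.castLE_le_castLE_iff, hi]
  omega

lemma rankOf_padKey_of_le (hn : ℓ ≤ n) (hz : ∀ i, z ≤ f i) {r : Fin n} (hr : ℓ ≤ (r : ℕ)) :
    rankOf (padKey n f z) r = #{i | f i = z} + (r - ℓ + 1) := by
  have hbelow : #{j : Fin n | padKey n f z j < z} = 0 :=
    card_eq_zero.mpr <| filter_eq_empty_iff.mpr fun j _ => by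
      rcases Fin.exists_castLE_or_le hn j with ⟨i', rfl⟩ | hj
      · simpa using hz i'
      · simp [padKey_of_le f z hj]
  have htie : #{j : Fin n | (padKey n f z j = z ∧ j ≤ r) ∧ ℓ ≤ (j : ℕ)} = r - ℓ + 1 := by
    rw [← Fin.card_filter_le_val_and_le hr]
    exact congrArg card <| filter_congr fun j _ =>
      ⟨fun h => ⟨h.2, h.1.2⟩, fun h => ⟨⟨padKey_of_le f z h.1, h.2⟩, h.1⟩⟩
  have hclause : #{i : Fin ℓ | f i = z ∧ Fin.castLE hn i ≤ r} = #{i | f i = z} :=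
    congrArg card <| filter_congr fun i _ =>
      ⟨And.left, fun h => ⟨h, by rw [Fin.le_def, Fin.val_castLE]; omega⟩⟩
  rw [rankOf, padKey_of_le f z hr, hbelow, Fin.card_filter_eq_card_filter_castLE_add hn, htie]
  simp only [padKey_castLE]
  rw [hclause, zero_add]

end PadKey

section Displacement

variable {K K' : Type*} [LinearOrder K] [LinearOrder K'] {ℓ n : ℕ}
  {g : Fin ℓ → K} {zg : K} {f : Fin ℓ → K'} {z : K'}

lemma rankOf_padKey_castLE_of_strictMono (hn : ℓ ≤ n) (hg : ∀ i, zg < g i)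
    (hrank : StrictMono (rankOf g)) (i : Fin ℓ) :
    rankOf (padKey n g zg) (Fin.castLE hn i) = n - ℓ + (i + 1) := by
  rw [rankOf_padKey_castLE_of_lt hn (hg i), rankOf_eq_of_strictMono hrank]

lemma rankOf_padKey_of_forall_lt (hn : ℓ ≤ n) (hg : ∀ i, zg < g i) {r : Fin n}
    (hr : ℓ ≤ (r : ℕ)) : rankOf (padKey n g zg) r = r - ℓ + 1 := by
  have hnone : #{i | g i = zg} = 0 :=
    card_eq_zero.mpr <| filter_eq_empty_iff.mpr fun i _ => (hg i).ne'
  rw [rankOf_padKey_of_le hn (fun i => (hg i).le) hr, hnone, zero_add]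

lemma dMD_padKey_of_forall_ne (hn : ℓ ≤ n) (hg : ∀ i, zg < g i)
    (hrank : StrictMono (rankOf g)) (hz : ∀ i, z ≤ f i) (hsat : ∀ i, f i ≠ z) :
    dMD (rankOf (padKey n g zg)) (rankOf (padKey n f z)) =
      univ.sup fun i : Fin ℓ => ((i : ℤ) + 1 - rankOf f i).natAbs := by
  have hclause (i : Fin ℓ) :
      ((rankOf (padKey n g zg) (Fin.castLE hn i) : ℤ)
        - rankOf (padKey n f z) (Fin.castLE hn i)).natAbs = ((i : ℤ) + 1 - rankOf f i).natAbs := by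
    rw [rankOf_padKey_castLE_of_strictMono hn hg hrank,
      rankOf_padKey_castLE_of_lt hn ((hz i).lt_of_ne (hsat i).symm)]
    omega
  have hnone : #{i | f i = z} = 0 :=
    card_eq_zero.mpr <| filter_eq_empty_iff.mpr fun i _ => hsat i
  refine le_antisymm (Finset.sup_le fun r _ => ?_) (Finset.sup_le fun i _ => ?_)
  · rcases Fin.exists_castLE_or_le hn r with ⟨i, rfl⟩ | hr
    · exact (hclause i).le.trans (Finset.le_sup (mem_univ i)
        (f := fun i : Fin ℓ => ((i : ℤ) + 1 - rankOf f i).natAbs))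
    · rw [rankOf_padKey_of_forall_lt hn hg hr, rankOf_padKey_of_le hn hz hr, hnone]
      simp
  · exact le_sup_of_le (mem_univ (Fin.castLE hn i)) (hclause i).ge

lemma dMD_padKey_of_exists_eq (hn : 2 * ℓ ≤ n) (hg : ∀ i, zg < g i)
    (hrank : StrictMono (rankOf g)) (hz : ∀ i, z ≤ f i) (hviol : ∃ i, f i = z) :
    dMD (rankOf (padKey n g zg)) (rankOf (padKey n f z)) =
      n - ℓ + (univ.filter fun i => f i = z).sup
        fun i => (i : ℕ) + 1 - #{i' | f i' = z ∧ i' ≤ i} := by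
  have hn' : ℓ ≤ n := by omega
  have hviolated {i : Fin ℓ} (hi : f i = z) :
      ((rankOf (padKey n g zg) (Fin.castLE hn' i) : ℤ)
        - rankOf (padKey n f z) (Fin.castLE hn' i)).natAbs
        = n - ℓ + ((i : ℕ) + 1 - #{i' | f i' = z ∧ i' ≤ i}) := by
    have hpos := one_le_rankOf (padKey n f z) (Fin.castLE hn' i)
    rw [rankOf_padKey_castLE_of_eq hn' hz hi] at hpos ⊢
    have := Fin.card_filter_and_le_le (fun i' => f i' = z) i
    rw [rankOf_padKey_castLE_of_strictMono hn' hg hrank]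
    omega
  refine le_antisymm (Finset.sup_le fun r _ => ?_) ?_
  · rcases Fin.exists_castLE_or_le hn' r with ⟨i, rfl⟩ | hr
    · by_cases hi : f i = z
      · rw [hviolated hi]
        exact Nat.add_le_add_left (Finset.le_sup (mem_filter.mpr ⟨mem_univ i, hi⟩)
          (f := fun i : Fin ℓ => (i : ℕ) + 1 - #{i' | f i' = z ∧ i' ≤ i})) _
      · have := rankOf_le f i
        have := one_le_rankOf f i
        rw [rankOf_padKey_castLE_of_strictMono hn' hg hrank,
          rankOf_padKey_castLE_of_lt hn' ((hz i).lt_of_ne (Ne.symm hi))]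
        omega
    · have := card_le_univ (univ.filter fun i : Fin ℓ => f i = z)
      rw [Fintype.card_fin] at this
      rw [rankOf_padKey_of_forall_lt hn' hg hr, rankOf_padKey_of_le hn' hz hr]
      omega
  · obtain ⟨i, hi, hT⟩ := exists_mem_eq_sup _
      (hviol.imp fun i hi => mem_filter.mpr ⟨mem_univ i, hi⟩) fun i : Fin ℓ =>
        (i : ℕ) + 1 - #{i' | f i' = z ∧ i' ≤ i}
    rw [hT, ← hviolated (mem_filter.mp hi).2]
    exact Finset.le_sup (mem_univ (Fin.castLE hn' i)) (f := fun r : Fin n =>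
      ((rankOf (padKey n g zg) r : ℤ) - rankOf (padKey n f z) r).natAbs)

theorem dMD_padKey_succ_sub_dMD_padKey (hn : 2 * ℓ ≤ n) (hg : ∀ i, zg < g i)
    (hrank : StrictMono (rankOf g)) (hz : ∀ i, z ≤ f i) :
    (dMD (rankOf (padKey (n + 1) g zg)) (rankOf (padKey (n + 1) f z)) : ℤ)
      - dMD (rankOf (padKey n g zg)) (rankOf (padKey n f z))
      = if ∀ i, f i ≠ z then 0 else 1 := by
  split_ifs with hsat
  · rw [dMD_padKey_of_forall_ne (by omega) hg hrank hz hsat,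
      dMD_padKey_of_forall_ne (by omega) hg hrank hz hsat, sub_self]
  · have hviol : ∃ i, f i = z := by simpa using hsat
    rw [dMD_padKey_of_exists_eq (by omega) hg hrank hz hviol,
      dMD_padKey_of_exists_eq hn hg hrank hz hviol]
    omega

end Displacement

lemma List.map_le_map_of_forall_le {α : Type*} {f g : α → ℕ} :
    ∀ {s : List α}, (∀ x ∈ s, f x ≤ g x) → s.map f ≤ s.map g
  | [], _ => le_rfl
  | a :: s, h => by
    rcases (h a mem_cons_self).lt_or_eq with hlt | heq
    · exact le_of_lt (List.Lex.rel hlt)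
    · rw [map_cons, map_cons, heq]
      exact cons_le_cons _ (map_le_map_of_forall_le fun x hx => h x (mem_cons_of_mem _ hx))

section Clauses

variable {ℓ m : ℕ}

def incidenceRow (E : Finset (Fin m)) : Fin m → ℕ :=
  fun j => if j ∈ E then 1 else 0

lemma incidenceRow_eq_zero_iff {E : Finset (Fin m)} {j : Fin m} :
    incidenceRow E j = 0 ↔ j ∉ E := by
  simp [incidenceRow]

lemma forall_incidenceRow_eq_zero_iff {C E : Finset (Fin m)} :
    (∀ j ∈ C, incidenceRow E j = 0) ↔ Disjoint C E := by
  simp only [incidenceRow_eq_zero_iff, disjoint_left]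

lemma clauseMat_eq_padKey (n : ℕ) (D : Fin ℓ → Finset (Fin m)) :
    clauseMat ℓ m n D = padKey n (fun i => incidenceRow (D i)) 0 := by
  funext r j
  unfold clauseMat padKey incidenceRow
  split_ifs <;> simp_all

/-- Each of the sum, max and lex keys has the form `r ↦ F C (M r)`. -/
theorem dMD_clauseMat_succ_sub_dMD_clauseMat {K : Type*} [LinearOrder K]
    (F : Finset (Fin m) → (Fin m → ℕ) → K)
    (hF_le : ∀ C E, F C 0 ≤ F C (incidenceRow E))
    (hF_eq : ∀ C E, F C (incidenceRow E) = F C 0 ↔ Disjoint C E)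
    (D : Fin ℓ → Finset (Fin m)) (hD : ∀ i, (D i).Nonempty) {n : ℕ} (hn : 2 * ℓ ≤ n)
    (hord : ∀ i i' : Fin ℓ, i < i' →
      rankOf (fun r => F univ (clauseMat ℓ m n D r)) (Fin.castLE (by omega) i) <
        rankOf (fun r => F univ (clauseMat ℓ m n D r)) (Fin.castLE (by omega) i'))
    (C : Finset (Fin m)) :
    ((dMD (rankOf fun r => F univ (clauseMat ℓ m (n + 1) D r))
        (rankOf fun r => F C (clauseMat ℓ m (n + 1) D r)) : ℤ)
      - dMD (rankOf fun r => F univ (clauseMat ℓ m n D r))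
        (rankOf fun r => F C (clauseMat ℓ m n D r)))
      = if ∀ i, (C ∩ D i).Nonempty then 0 else 1 := by
  have hkey (C : Finset (Fin m)) (n : ℕ) : (fun r => F C (clauseMat ℓ m n D r))
      = padKey n (fun i => F C (incidenceRow (D i))) (F C 0) := by
    funext r
    rw [clauseMat_eq_padKey, apply_padKey (F C)]
    rfl
  simp only [hkey] at hord ⊢
  have hg (i : Fin ℓ) : F univ 0 < F univ (incidenceRow (D i)) :=
    (hF_le univ (D i)).lt_of_ne fun h =>
      let ⟨j, hj⟩ := hD i
      disjoint_left.mp ((hF_eq univ (D i)).mp h.symm) (mem_univ j) hj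
  have hrank : StrictMono (rankOf fun i => F univ (incidenceRow (D i))) := fun i i' h => by
    have := hord i i' h
    rw [rankOf_padKey_castLE_of_lt _ (hg i), rankOf_padKey_castLE_of_lt _ (hg i')] at this
    omega
  rw [dMD_padKey_succ_sub_dMD_padKey hn hg hrank fun i => hF_le C (D i)]
  simp only [Ne, hF_eq, not_disjoint_iff_nonempty_inter]

end Clauses

/-- For a positive CNF formula with nonempty clauses `D 1, …, D ℓ ⊆ {1,…,m}`,
let `M_κ ∈ {0,1}^{(2ℓ+κ) × m}` (`κ ∈ {1,2}`) have the incidence rows of the clauses as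
its first `ℓ` rows and all-zero remaining rows.  For each of the rankings by sum, max and
lex keys: if the clauses are indexed so that in the full-column ranking of `M_κ` row `i`
precedes row `i'` whenever `i < i' ≤ ℓ`, then for every column set `C` the difference of
maximum displacement distances
`d_md(r(M_2, full), r(M_2, C)) − d_md(r(M_1, full), r(M_1, C))`
is `0` if `α_C` models the formula and `1` otherwise. -/
theorem stmt_9 (ℓ m : ℕ) (D : Fin ℓ → Finset (Fin m)) (hD : ∀ i, (D i).Nonempty) :
    ((∀ i i' : Fin ℓ, i < i' →
        rankOf (sumKey (clauseMat ℓ m (2*ℓ+1) D) Finset.univ) (Fin.castLE (by omega) i) <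
        rankOf (sumKey (clauseMat ℓ m (2*ℓ+1) D) Finset.univ) (Fin.castLE (by omega) i')) →
     (∀ i i' : Fin ℓ, i < i' →
        rankOf (sumKey (clauseMat ℓ m (2*ℓ+2) D) Finset.univ) (Fin.castLE (by omega) i) <
        rankOf (sumKey (clauseMat ℓ m (2*ℓ+2) D) Finset.univ) (Fin.castLE (by omega) i')) →
     ∀ C : Finset (Fin m),
       ((dMD (rankOf (sumKey (clauseMat ℓ m (2*ℓ+2) D) Finset.univ))
             (rankOf (sumKey (clauseMat ℓ m (2*ℓ+2) D) C)) : ℤ) -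
        (dMD (rankOf (sumKey (clauseMat ℓ m (2*ℓ+1) D) Finset.univ))
             (rankOf (sumKey (clauseMat ℓ m (2*ℓ+1) D) C)) : ℤ))
         = if ∀ i : Fin ℓ, (C ∩ D i).Nonempty then 0 else 1) ∧
    ((∀ i i' : Fin ℓ, i < i' →
        rankOf (maxKey (clauseMat ℓ m (2*ℓ+1) D) Finset.univ) (Fin.castLE (by omega) i) <
        rankOf (maxKey (clauseMat ℓ m (2*ℓ+1) D) Finset.univ) (Fin.castLE (by omega) i')) →
     (∀ i i' : Fin ℓ, i < i' →
        rankOf (maxKey (clauseMat ℓ m (2*ℓ+2) D) Finset.univ) (Fin.castLE (by omega) i) <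
        rankOf (maxKey (clauseMat ℓ m (2*ℓ+2) D) Finset.univ) (Fin.castLE (by omega) i')) →
     ∀ C : Finset (Fin m),
       ((dMD (rankOf (maxKey (clauseMat ℓ m (2*ℓ+2) D) Finset.univ))
             (rankOf (maxKey (clauseMat ℓ m (2*ℓ+2) D) C)) : ℤ) -
        (dMD (rankOf (maxKey (clauseMat ℓ m (2*ℓ+1) D) Finset.univ))
             (rankOf (maxKey (clauseMat ℓ m (2*ℓ+1) D) C)) : ℤ))
         = if ∀ i : Fin ℓ, (C ∩ D i).Nonempty then 0 else 1) ∧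
    ((∀ i i' : Fin ℓ, i < i' →
        rankOf (lexKey (clauseMat ℓ m (2*ℓ+1) D) Finset.univ) (Fin.castLE (by omega) i) <
        rankOf (lexKey (clauseMat ℓ m (2*ℓ+1) D) Finset.univ) (Fin.castLE (by omega) i')) →
     (∀ i i' : Fin ℓ, i < i' →
        rankOf (lexKey (clauseMat ℓ m (2*ℓ+2) D) Finset.univ) (Fin.castLE (by omega) i) <
        rankOf (lexKey (clauseMat ℓ m (2*ℓ+2) D) Finset.univ) (Fin.castLE (by omega) i')) →
     ∀ C : Finset (Fin m),
       ((dMD (rankOf (lexKey (clauseMat ℓ m (2*ℓ+2) D) Finset.univ))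
             (rankOf (lexKey (clauseMat ℓ m (2*ℓ+2) D) C)) : ℤ) -
        (dMD (rankOf (lexKey (clauseMat ℓ m (2*ℓ+1) D) Finset.univ))
             (rankOf (lexKey (clauseMat ℓ m (2*ℓ+1) D) C)) : ℤ))
         = if ∀ i : Fin ℓ, (C ∩ D i).Nonempty then 0 else 1) := by
  refine ⟨fun hord _ => ?_, fun hord _ => ?_, fun hord _ => ?_⟩
  · refine dMD_clauseMat_succ_sub_dMD_clauseMat (fun C v => ∑ j ∈ C, v j)
      (fun _ _ => by simp) (fun C E => ?_) D hD (by omega) hord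
    simp [sum_eq_zero_iff, forall_incidenceRow_eq_zero_iff]
  · refine dMD_clauseMat_succ_sub_dMD_clauseMat (fun C v => C.sup v)
      (fun _ _ => by simp) (fun C E => ?_) D hD (by omega) hord
    rw [show C.sup (0 : Fin m → ℕ) = ⊥ from sup_bot C, Finset.sup_eq_bot_iff]
    exact forall_incidenceRow_eq_zero_iff
  · refine dMD_clauseMat_succ_sub_dMD_clauseMat (fun C v => (C.sort (· ≤ ·)).map v)
      (fun _ _ => List.map_le_map_of_forall_le fun _ _ => Nat.zero_le _) (fun C E => ?_)
      D hD (by omega) hord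
    rw [List.map_inj_left]
    simpa only [mem_sort, Pi.zero_apply] using forall_incidenceRow_eq_zero_iff
end

section
/- Let b_1,…,b_ℓ, d ∈ ℕ and j ∈ ℕ, and set N = ℓ+j+1. Define the cooperative game on players {1,…,N} with utility ν(C) = 1 if N ∈ C, C ∩ {ℓ+1,…,ℓ+j} = ∅, and Σ_{i ∈ C ∩ {1,…,ℓ}} b_i ≤ d, and ν(C) = 0 otherwise. Then Shapley(N, ν) = Σ_{k=0}^{ℓ} ( k! · (ℓ+j−k)! / (ℓ+j+1)! ) · s_k, where s_k = #{C ⊆ {1,…,ℓ} : |C| = k and Σ_{i∈C} b_i ≤ d}. -/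
open Finset

/-- The Shapley value of player `p` in the cooperative game on players `{1, …, N}` with
utility `ν`:  `Shapley(p, ν) = ∑_{C ⊆ P ∖ {p}} (|C|! (N−|C|−1)! / N!) (ν(C ∪ {p}) − ν(C))`. -/
noncomputable def shapley (N : ℕ) (ν : Finset (Fin N) → ℝ) (p : Fin N) : ℝ :=
  ∑ C ∈ (Finset.univ.erase p).powerset,
    ((Nat.factorial C.card * Nat.factorial (N - C.card - 1) : ℝ) / Nat.factorial N) *
      (ν (insert p C) - ν C)

/-!
Since `ν` vanishes on every coalition without the capacity player `N`, only the terms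
`ν(C ∪ {N})` survive in the Shapley sum, and these are the indicators of the feasible
coalitions. A feasible coalition contains no dummy, so it is the image of a set of items of
total weight at most `d`; grouping these item sets by cardinality gives the `s_k`.
-/

theorem Finset.powerset_map {α β : Type*} (f : α ↪ β) (s : Finset α) :
    (s.map f).powerset = s.powerset.map (mapEmbedding f).toEmbedding := by
  ext t
  simp only [mem_powerset, mem_map, RelEmbedding.coe_toEmbedding, mapEmbedding_apply,
    subset_map_iff, eq_comm]

theorem Finset.sum_filter_apply_card_eq_sum_range {α R : Type*} [Fintype α] [Semiring R]
    (P : Finset α → Prop) [DecidablePred P] (f : ℕ → R) :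
    ∑ C with P C, f #C =
      ∑ k ∈ range (Fintype.card α + 1), f k * (#{C | #C = k ∧ P C} : R) := by
  rw [← sum_fiberwise_of_maps_to (g := card) (t := range (Fintype.card α + 1))
    fun C _ ↦ mem_range.2 (Nat.lt_succ_of_le (card_le_univ C))]
  refine sum_congr rfl fun k _ ↦ ?_
  rw [filter_filter, filter_congr fun C _ ↦ and_comm, sum_congr rfl fun C hC ↦ by
    rw [(mem_filter.1 hC).2.1], sum_const, nsmul_eq_mul, Nat.cast_comm]

theorem shapley_eq_sum_of_eq_zero_of_notMem {N : ℕ} {ν : Finset (Fin N) → ℝ} {p : Fin N}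
    (hν : ∀ C, p ∉ C → ν C = 0) :
    shapley N ν p = ∑ C ∈ (univ.erase p).powerset,
      (Nat.factorial #C * Nat.factorial (N - #C - 1) : ℝ) / Nat.factorial N * ν (insert p C) := by
  refine sum_congr rfl fun C hC ↦ ?_
  rw [hν C fun hp ↦ by simpa using mem_powerset.1 hC hp, sub_zero]

-- Players are `0`-indexed: items `0, …, ℓ - 1`, dummies `ℓ, …, ℓ + j - 1`, capacity `ℓ + j`.
namespace Knapsack

variable {ℓ j : ℕ}

def itemWeight (b : Fin ℓ → ℕ) (q : Fin (ℓ + j + 1)) : ℕ :=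
  if h : (q : ℕ) < ℓ then b ⟨q, h⟩ else 0

def item : Fin ℓ ↪ Fin (ℓ + j + 1) :=
  Fin.castLEEmb (by omega)

theorem sum_itemWeight_map_item (b : Fin ℓ → ℕ) (D : Finset (Fin ℓ)) :
    ∑ q ∈ D.map (item (j := j)), itemWeight b q = ∑ i ∈ D, b i := by
  simp [itemWeight, item]

theorem mem_map_item_iff {q : Fin (ℓ + j + 1)} : q ∈ univ.map item ↔ (q : ℕ) < ℓ := by
  simp only [mem_map, mem_univ, true_and, item, Fin.coe_castLEEmb]
  exact ⟨fun ⟨i, hi⟩ ↦ hi ▸ i.isLt, fun h ↦ ⟨⟨q, h⟩, rfl⟩⟩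

theorem insert_last_feasible_iff (b : Fin ℓ → ℕ) (d : ℕ) {C : Finset (Fin (ℓ + j + 1))}
    (hC : Fin.last (ℓ + j) ∉ C) :
    (Fin.last (ℓ + j) ∈ insert (Fin.last (ℓ + j)) C ∧
        (∀ q ∈ insert (Fin.last (ℓ + j)) C, ¬(ℓ ≤ (q : ℕ) ∧ (q : ℕ) < ℓ + j)) ∧
        ∑ q ∈ insert (Fin.last (ℓ + j)) C, itemWeight b q ≤ d) ↔
      C ⊆ univ.map item ∧ ∑ q ∈ C, itemWeight b q ≤ d := by
  have hlast : itemWeight b (Fin.last (ℓ + j)) = 0 := dif_neg (by simp)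
  simp only [mem_insert_self, true_and, forall_mem_insert, sum_insert hC, hlast, zero_add,
    Fin.val_last, lt_irrefl, and_false, not_false_eq_true]
  refine and_congr_left' ⟨fun h q hq ↦ mem_map_item_iff.2 ?_, fun h q hq ↦ ?_⟩
  · have hq_last : (q : ℕ) ≠ ℓ + j := fun e ↦
      hC (by rwa [← Fin.ext (e.trans (Fin.val_last _).symm)])
    have := h q hq
    omega
  · have := mem_map_item_iff.1 (h hq)
    omega

theorem filter_feasible_eq_map (b : Fin ℓ → ℕ) (d : ℕ) :
    {C ∈ (univ.erase (Fin.last (ℓ + j))).powerset |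
        C ⊆ univ.map item ∧ ∑ q ∈ C, itemWeight b q ≤ d} =
      map (mapEmbedding item).toEmbedding {D : Finset (Fin ℓ) | ∑ i ∈ D, b i ≤ d} := by
  have hsub : univ.map (item (j := j)) ⊆ univ.erase (Fin.last (ℓ + j)) := fun q hq ↦
    mem_erase.2 ⟨fun h ↦ by simpa [h] using mem_map_item_iff.1 hq, mem_univ q⟩
  have hrestrict : {C ∈ (univ.erase (Fin.last (ℓ + j))).powerset |
      C ⊆ univ.map item ∧ ∑ q ∈ C, itemWeight b q ≤ d} =
      {C ∈ (univ.map item).powerset | ∑ q ∈ C, itemWeight b q ≤ d} := by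
    ext C
    simp only [mem_filter, mem_powerset]
    exact ⟨fun ⟨_, h, hw⟩ ↦ ⟨h, hw⟩, fun ⟨h, hw⟩ ↦ ⟨h.trans hsub, h, hw⟩⟩
  rw [hrestrict, powerset_map, filter_map, powerset_univ]
  congr 1
  exact filter_congr fun D _ ↦ by
    change ∑ q ∈ D.map item, itemWeight b q ≤ d ↔ _
    rw [sum_itemWeight_map_item]

end Knapsack

open Knapsack in
/-- In the knapsack game on `N = ℓ + j + 1` players (items `1, …, ℓ` with
weights `b`, dummy players `ℓ+1, …, ℓ+j`, and the capacity as player `N`), where a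
coalition has utility `1` iff it contains player `N`, avoids all dummies, and the total
weight of its items is at most `d`, the Shapley value of player `N` equals
`∑_{k=0}^{ℓ} (k! (ℓ+j−k)! / (ℓ+j+1)!) s_k`, where `s_k` is the number of `k`-element item
sets of weight at most `d`. -/
theorem stmt_11 (ℓ j d : ℕ) (b : Fin ℓ → ℕ)
    (ν : Finset (Fin (ℓ + j + 1)) → ℝ)
    (hν : ∀ C, ν C =
      if (Fin.last (ℓ + j) ∈ C ∧
          (∀ q ∈ C, ¬(ℓ ≤ (q : ℕ) ∧ (q : ℕ) < ℓ + j)) ∧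
          (∑ q ∈ C, if h : (q : ℕ) < ℓ then b ⟨(q : ℕ), h⟩ else 0) ≤ d)
        then (1 : ℝ) else 0) :
    shapley (ℓ + j + 1) ν (Fin.last (ℓ + j)) =
      ∑ k ∈ Finset.range (ℓ + 1),
        ((Nat.factorial k * Nat.factorial (ℓ + j - k) : ℝ) / Nat.factorial (ℓ + j + 1)) *
          (((Finset.univ : Finset (Finset (Fin ℓ))).filter
              (fun C => C.card = k ∧ ∑ i ∈ C, b i ≤ d)).card : ℝ) := by
  have hν_insert : ∀ C, Fin.last (ℓ + j) ∉ C → ν (insert (Fin.last (ℓ + j)) C) =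
      if C ⊆ univ.map item ∧ ∑ q ∈ C, itemWeight b q ≤ d then 1 else 0 :=
    fun C hC ↦ (hν _).trans (if_congr (insert_last_feasible_iff b d hC) rfl rfl)
  calc shapley (ℓ + j + 1) ν (Fin.last (ℓ + j))
      = ∑ C ∈ (univ.erase (Fin.last (ℓ + j))).powerset,
          (Nat.factorial #C * Nat.factorial (ℓ + j - #C) : ℝ) / Nat.factorial (ℓ + j + 1) *
            ν (insert (Fin.last (ℓ + j)) C) := by
        rw [shapley_eq_sum_of_eq_zero_of_notMem fun C hC ↦ by rw [hν, if_neg fun h ↦ hC h.1]]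
        simp only [Nat.sub_right_comm _ _ 1, Nat.add_sub_cancel]
    _ = ∑ C ∈ (univ.erase (Fin.last (ℓ + j))).powerset with
            C ⊆ univ.map item ∧ ∑ q ∈ C, itemWeight b q ≤ d,
          (Nat.factorial #C * Nat.factorial (ℓ + j - #C) : ℝ) / Nat.factorial (ℓ + j + 1) := by
        rw [sum_filter]
        refine sum_congr rfl fun C hC ↦ ?_
        rw [hν_insert C fun h ↦ by simpa using mem_powerset.1 hC h, mul_ite, mul_one, mul_zero]
    _ = ∑ D ∈ univ with ∑ i ∈ D, b i ≤ d,
          (Nat.factorial #D * Nat.factorial (ℓ + j - #D) : ℝ) / Nat.factorial (ℓ + j + 1) := by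
        rw [filter_feasible_eq_map, sum_map]
        simp only [RelEmbedding.coe_toEmbedding, mapEmbedding_apply, card_map]
    _ = _ := by
        rw [sum_filter_apply_card_eq_sum_range (fun D ↦ ∑ i ∈ D, b i ≤ d)
          fun k ↦ (Nat.factorial k * Nat.factorial (ℓ + j - k) : ℝ) / Nat.factorial (ℓ + j + 1),
          Fintype.card_fin]
end

section
/- Let φ be a positive CNF formula over variables X_1,…,X_m with nonempty clauses D_1,…,D_ℓ ⊆ {1,…,m}, and let j ∈ ℕ; set N = m+j+1. Define the cooperative game on players {1,…,N} with utility ν(C) = 1 if C ∩ ( D_i ∪ {m+1,…,m+j+1} ) ≠ ∅ for every i ∈ {1,…,ℓ}, and ν(C) = 0 otherwise. Then Shapley(N, ν) = Σ_{k=0}^{m} ( k! · (m+j−k)! / (m+j+1)! ) · s̄_k, where s̄_k = #{C ⊆ {1,…,m} : |C| = k and C ∩ D_i = ∅ for some i ∈ {1,…,ℓ}}. -/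
/-! Player `N` is a fresh variable and so satisfies every clause: its marginal contribution is
`1` on the losing coalitions and `0` elsewhere. A losing coalition contains no fresh player, so it
is the image of a set of variables falsifying some clause; grouping these sets by size gives the
formula. -/

open Finset

open scoped Nat

theorem shapley_eq_sum_losing {N : ℕ} {ν : Finset (Fin N) → ℝ} {p : Fin N}
    (W : Finset (Fin N) → Prop) [DecidablePred W] (hν : ∀ C, ν C = if W C then 1 else 0)
    (hp : ∀ C, W (insert p C)) :
    shapley N ν p = ∑ C with ¬ W C, ((C.card ! * (N - C.card - 1)! : ℝ) / N !) := by
  have hlosing : ({C | ¬ W C} : Finset _) = {C ∈ (univ.erase p).powerset | ¬ W C} := by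
    ext C
    simp only [mem_filter, mem_univ, true_and, mem_powerset, subset_erase, subset_univ,
      iff_and_self]
    intro hC hpC
    exact hC (insert_eq_of_mem hpC ▸ hp C)
  rw [shapley, hlosing, sum_filter]
  refine sum_congr rfl fun C _ => ?_
  by_cases hC : W C <;> simp [hν, hp, hC]

theorem sum_card_eq_sum_range_card_filter {α M : Type*} [Fintype α] [AddCommMonoid M]
    (S : Finset (Finset α)) (g : ℕ → M) :
    ∑ C ∈ S, g C.card = ∑ k ∈ range (Fintype.card α + 1), #{C ∈ S | C.card = k} • g k := by
  rw [← sum_fiberwise_of_maps_to' (t := range (Fintype.card α + 1))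
    (fun C _ => mem_range_succ_iff.2 (card_le_univ C))]
  simp only [sum_const]

theorem not_satisfies_iff_exists_map_castLE {ι : Type*} {m N : ℕ} (hmN : m ≤ N)
    (D : ι → Finset (Fin m)) (C : Finset (Fin N)) :
    (¬ ∀ i, ∃ q ∈ C, if h : (q : ℕ) < m then (⟨q, h⟩ : Fin m) ∈ D i else True) ↔
      ∃ C' : Finset (Fin m), (∃ i, C' ∩ D i = ∅) ∧ C'.map (Fin.castLEEmb hmN) = C := by
  push Not
  constructor
  · rintro ⟨i, hi⟩
    have hlt : ∀ q ∈ C, (q : ℕ) < m := fun q hq => by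
      by_contra h
      simpa [h] using hi q hq
    obtain ⟨C', -, rfl⟩ : ∃ C' ⊆ univ, C = C'.map (Fin.castLEEmb hmN) :=
      subset_map_iff.1 fun q hq => mem_map.2 ⟨⟨q, hlt q hq⟩, mem_univ _, Fin.ext rfl⟩
    refine ⟨C', ⟨i, ?_⟩, rfl⟩
    rw [← disjoint_iff_inter_eq_empty, disjoint_left]
    intro x hx
    simpa using hi _ (mem_map_of_mem _ hx)
  · rintro ⟨C', ⟨i, hi⟩, rfl⟩
    refine ⟨i, fun q hq => ?_⟩
    obtain ⟨x, hx, rfl⟩ := mem_map.1 hq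
    rw [← disjoint_iff_inter_eq_empty, disjoint_left] at hi
    simpa using hi hx

theorem filter_not_satisfies_eq_map_castLE {ℓ m N : ℕ} (hmN : m ≤ N)
    (D : Fin ℓ → Finset (Fin m)) :
    ({C | ¬ ∀ i, ∃ q ∈ C, if h : (q : ℕ) < m then (⟨q, h⟩ : Fin m) ∈ D i else True} :
        Finset (Finset (Fin N))) =
      ({C' | ∃ i, C' ∩ D i = ∅} : Finset (Finset (Fin m))).map
        (mapEmbedding (Fin.castLEEmb hmN)).toEmbedding := by
  ext C
  simp only [mem_filter, mem_univ, true_and, not_satisfies_iff_exists_map_castLE hmN, mem_map,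
    RelEmbedding.coe_toEmbedding, mapEmbedding_apply]

open scoped Classical in
theorem stmt_12_general (ℓ m j : ℕ) (D : Fin ℓ → Finset (Fin m))
    (ν : Finset (Fin (m + j + 1)) → ℝ)
    (hν : ∀ C, ν C =
      if (∀ i : Fin ℓ, ∃ q ∈ C,
          (if h : (q : ℕ) < m then (⟨(q : ℕ), h⟩ : Fin m) ∈ D i else True))
        then (1 : ℝ) else 0) :
    shapley (m + j + 1) ν (Fin.last (m + j)) =
      ∑ k ∈ Finset.range (m + 1),
        ((Nat.factorial k * Nat.factorial (m + j - k) : ℝ) / Nat.factorial (m + j + 1)) *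
          (((Finset.univ : Finset (Finset (Fin m))).filter
              (fun C => C.card = k ∧ ∃ i : Fin ℓ, C ∩ D i = ∅)).card : ℝ) := by
  have hsub : ∀ k, m + j + 1 - k - 1 = m + j - k := by omega
  rw [shapley_eq_sum_losing _ hν fun C i => ⟨Fin.last _, mem_insert_self _ _, by simp⟩,
    filter_not_satisfies_eq_map_castLE (by omega), sum_map]
  simp only [RelEmbedding.coe_toEmbedding, mapEmbedding_apply, card_map, hsub]
  rw [sum_card_eq_sum_range_card_filter _ fun k => (k ! * (m + j - k)! : ℝ) / (m + j + 1)!,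
    Fintype.card_fin]
  refine sum_congr rfl fun k _ => ?_
  rw [filter_filter, nsmul_eq_mul, mul_comm]
  simp only [and_comm]

open scoped Classical in
/-- For a positive CNF formula with nonempty clauses `D 1, …, D ℓ ⊆ {1,…,m}`
and `j` extra fresh variables, consider the game on `N = m + j + 1` players where a
coalition `C` has utility `1` iff `C ∩ (D i ∪ {m+1, …, m+j+1}) ≠ ∅` for every clause `i`
(a player `q ≥ m+1` satisfies every clause).  Then the Shapley value of player `N` equals
`∑_{k=0}^{m} (k! (m+j−k)! / (m+j+1)!) s̄_k`, where `s̄_k` is the number of `k`-element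
variable sets `C ⊆ {1,…,m}` that fail some clause, i.e. `C ∩ D i = ∅` for some `i`. -/
theorem stmt_12 (ℓ m j : ℕ) (D : Fin ℓ → Finset (Fin m)) (hD : ∀ i, (D i).Nonempty)
    (ν : Finset (Fin (m + j + 1)) → ℝ)
    (hν : ∀ C, ν C =
      if (∀ i : Fin ℓ, ∃ q ∈ C,
          (if h : (q : ℕ) < m then (⟨(q : ℕ), h⟩ : Fin m) ∈ D i else True))
        then (1 : ℝ) else 0) :
    shapley (m + j + 1) ν (Fin.last (m + j)) =
      ∑ k ∈ Finset.range (m + 1),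
        ((Nat.factorial k * Nat.factorial (m + j - k) : ℝ) / Nat.factorial (m + j + 1)) *
          (((Finset.univ : Finset (Finset (Fin m))).filter
              (fun C => C.card = k ∧ ∃ i : Fin ℓ, C ∩ D i = ∅)).card : ℝ) :=
  stmt_12_general ℓ m j D ν hν
end

section
/- For every ℓ ∈ ℕ, the (ℓ+1)×(ℓ+1) rational matrix A with entries A[i][j] = (ℓ + i − j)! for 0 ≤ i, j ≤ ℓ (note that ℓ + i − j ≥ 0 for all such i, j) has nonzero determinant; equivalently, A is invertible. -/
open Polynomial Finset

lemma fact_add_eq (m : ℕ) : ∀ i : ℕ,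
    Nat.factorial (m + i) = Nat.factorial m * ∏ k ∈ Finset.range i, (m + k + 1) := by
  intro i
  induction i with
  | zero => simp
  | succ n ih =>
      rw [Finset.prod_range_succ, ← mul_assoc, ← ih, ← Nat.add_assoc, Nat.factorial_succ,
        mul_comm]

/-- The `(ℓ+1) × (ℓ+1)` rational matrix `A` with entries
`A i j = (ℓ + i − j)!` (for `0 ≤ i, j ≤ ℓ`, so `ℓ + i − j ≥ 0`) has nonzero determinant;
equivalently, it is invertible. -/
theorem stmt_13 (ℓ : ℕ) (A : Matrix (Fin (ℓ + 1)) (Fin (ℓ + 1)) ℚ)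
    (hA : ∀ i j : Fin (ℓ + 1), A i j = Nat.factorial (ℓ + (i : ℕ) - (j : ℕ))) :
    A.det ≠ 0 ∧ IsUnit A := by
  set v : Fin (ℓ + 1) → ℚ := fun j => ((ℓ - (j : ℕ) : ℕ) : ℚ) with hv
  set p : Fin (ℓ + 1) → ℚ[X] := fun i =>
    ∏ k ∈ Finset.range (i : ℕ), (X + C ((k : ℚ) + 1)) with hp
  have h_monic : ∀ i, (p i).Monic := fun i =>
    monic_prod_of_monic _ _ fun k _ => monic_X_add_C _
  have h_deg : ∀ i, (p i).natDegree = (i : ℕ) := by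
    intro i
    rw [hp]
    rw [Polynomial.natDegree_prod _ _ (fun k _ => (monic_X_add_C _).ne_zero)]
    simp only [Polynomial.natDegree_X_add_C, Finset.sum_const, smul_eq_mul, mul_one,
      Finset.card_range]
  set B : Matrix (Fin (ℓ + 1)) (Fin (ℓ + 1)) ℚ :=
    Matrix.of (fun i j => (p j).eval (v i)) with hB
  have hdB : B.det ≠ 0 := by
    rw [← Matrix.det_eval_matrixOfPolynomials_eq_det_vandermonde v p h_deg h_monic]
    rw [Matrix.det_vandermonde_ne_zero_iff]
    intro a b hab
    have ha : (a : ℕ) ≤ ℓ := Nat.lt_succ_iff.mp a.isLt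
    have hb : (b : ℕ) ≤ ℓ := Nat.lt_succ_iff.mp b.isLt
    simp only [hv] at hab
    have : ℓ - (a : ℕ) = ℓ - (b : ℕ) := Nat.cast_injective hab
    have : (a : ℕ) = (b : ℕ) := by omega
    exact Fin.ext this
  have hAB : A = Matrix.of fun (i j : Fin (ℓ + 1)) =>
      ((Nat.factorial (ℓ - (j : ℕ)) : ℚ)) * B.transpose i j := by
    ext i j
    have hj : (j : ℕ) ≤ ℓ := Nat.lt_succ_iff.mp j.isLt
    have h1 : ℓ + (i : ℕ) - (j : ℕ) = (ℓ - (j : ℕ)) + (i : ℕ) := by omega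
    rw [hA, h1, fact_add_eq]
    simp only [Matrix.of_apply, Matrix.transpose_apply, hB, hp, hv, eval_prod, eval_add,
      eval_X, eval_C]
    push_cast
    congr 1
    refine Finset.prod_congr rfl fun k _ => ?_
    ring
  have hdet : A.det ≠ 0 := by
    rw [hAB,
      Matrix.det_mul_row (fun j : Fin (ℓ + 1) => ((Nat.factorial (ℓ - (j : ℕ)) : ℚ)))
        B.transpose]
    refine mul_ne_zero (Finset.prod_ne_zero_iff.mpr fun j _ => ?_) ?_
    · exact_mod_cast Nat.factorial_ne_zero _
    · rw [Matrix.det_transpose]; exact hdB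
  exact ⟨hdet, (Matrix.isUnit_iff_isUnit_det A).mpr (isUnit_iff_ne_zero.mpr hdet)⟩
end
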